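/- Fix n ∈ ℝ₊^I with n ≠ 0. A vector Λ⁺ = (Λ_i : i ∈ I₊(n)) is the unique optimal solution of the maximization of G_n over the feasible set for n if and only if there exists p ∈ ℝ₊^J such that: (i) p_j (C_j − Σ_{i∈I₊(n)} A_{ji} Λ_i) = 0 for all j; (ii) Σ_j p_j A_{ji} > 0 for all i ∈ I₊(n); (iii) Λ_i = n_i (κ_i / Σ_j p_j A_{ji})^{1/α} for all i ∈ I₊(n); and (iv) Σ_{i∈I₊(n)} A_{ji} Λ_i ≤ C_j for all j. -/

import Mathlib

open Real Set

noncomputable section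

/-- Feasible set for the bandwidth allocation problem at state `n`: the vector
`Λ⁺ = (Λ_i : i ∈ I₊(n))` is embedded in `ℝ^I` by requiring `L i = 0` whenever `n i = 0`. -/
def Feasible {I J : ℕ} (A : Fin J → Fin I → ℝ) (C : Fin J → ℝ)
    (n : Fin I → ℝ) : Set (Fin I → ℝ) :=
  {L | (∀ i, 0 ≤ L i) ∧ (∀ i, n i = 0 → L i = 0) ∧ ∀ j, ∑ i, A j i * L i ≤ C j}

/-- The objective `G_n(Λ⁺)`, taking the value `⊥ = -∞` when `α ≥ 1` and some
coordinate of `Λ⁺` in `I₊(n)` vanishes. -/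
def Gfun {I : ℕ} (α : ℝ) (κ : Fin I → ℝ) (n L : Fin I → ℝ) : EReal :=
  if 1 ≤ α ∧ ∃ i, 0 < n i ∧ L i = 0 then ⊥
  else if α = 1 then
    ((∑ i, if 0 < n i then κ i * n i * Real.log (L i) else 0 : ℝ) : EReal)
  else
    ((∑ i, if 0 < n i then κ i * n i ^ α * L i ^ (1 - α) / (1 - α) else 0 : ℝ) : EReal)

/-- `L` is an optimal weighted α-fair bandwidth allocation for the state `n`,
i.e. a maximizer of `G_n` over the feasible set for `n` (with `L i = 0` for `i ∈ I₀(n)`). -/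
def IsAlloc {I J : ℕ} (A : Fin J → Fin I → ℝ) (C : Fin J → ℝ) (α : ℝ)
    (κ : Fin I → ℝ) (n L : Fin I → ℝ) : Prop :=
  L ∈ Feasible A C n ∧ ∀ L' ∈ Feasible A C n, Gfun α κ n L' ≤ Gfun α κ n L

/-- `f` is absolutely continuous on `[0, T]` for every `T > 0` (ε-δ definition with
finitely many pairwise disjoint subintervals). -/
def AbsContNonneg (f : ℝ → ℝ) : Prop :=
  ∀ T > (0:ℝ), ∀ ε > (0:ℝ), ∃ δ > (0:ℝ), ∀ (m : ℕ) (a b : Fin m → ℝ),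
    (∀ k, 0 ≤ a k ∧ a k ≤ b k ∧ b k ≤ T) →
    (∀ k l, k < l → b k ≤ a l ∨ b l ≤ a k) →
    (∑ k, (b k - a k)) < δ → (∑ k, |f (b k) - f (a k)|) < ε

/-- Fluid model solution: `n : [0,∞) → ℝ₊^I` absolutely continuous, and at every
regular point `t` the derivative conditions (13) and capacity condition (14) hold. -/
def IsFluidSol {I J : ℕ} (A : Fin J → Fin I → ℝ) (C : Fin J → ℝ)
    (ν μ : Fin I → ℝ) (Λ : (Fin I → ℝ) → Fin I → ℝ)
    (n : ℝ → Fin I → ℝ) : Prop :=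
  (∀ i, AbsContNonneg fun t => n t i) ∧
  (∀ t ∈ Ici (0:ℝ), ∀ i, 0 ≤ n t i) ∧
  ∀ t ∈ Ici (0:ℝ),
    (∀ i, DifferentiableWithinAt ℝ (fun s => n s i) (Ici 0) t) →
    (∀ i, (0 < n t i →
        HasDerivWithinAt (fun s => n s i) (ν i - μ i * Λ (n t) i) (Ici 0) t) ∧
      (n t i = 0 → HasDerivWithinAt (fun s => n s i) 0 (Ici 0) t)) ∧
    ∀ j, (∑ i, A j i * (if 0 < n t i then Λ (n t) i else ν i / μ i)) ≤ C j

/-- The set `J*` of critically loaded resources. -/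
def Jstar {I J : ℕ} (A : Fin J → Fin I → ℝ) (C : Fin J → ℝ)
    (ν μ : Fin I → ℝ) : Set (Fin J) :=
  {j | ∑ i, A j i * (ν i / μ i) = C j}

/-- The workload map `w(n)`. -/
def wl {I J : ℕ} (A : Fin J → Fin I → ℝ) (μ : Fin I → ℝ)
    (n : Fin I → ℝ) : Fin J → ℝ :=
  fun j => ∑ i, A j i * n i / μ i

/-- Feasible set of the workload optimization problem (22) for workload `w`. -/
def WFeasible {I J : ℕ} (A : Fin J → Fin I → ℝ) (C : Fin J → ℝ)
    (ν μ : Fin I → ℝ) (w : Fin J → ℝ) : Set (Fin I → ℝ) :=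
  {m | (∀ i, 0 ≤ m i) ∧ ∀ j ∈ Jstar A C ν μ, w j ≤ ∑ i, A j i * m i / μ i}

/-- The Lyapunov function `F`. -/
def Ffun {I : ℕ} (α : ℝ) (κ ν μ : Fin I → ℝ) (n : Fin I → ℝ) : ℝ :=
  (1 / (α + 1)) * ∑ i, ν i * κ i * μ i ^ (α - 1) * (n i / ν i) ^ (α + 1)

/-- The function `K` (the derivative of `F` along fluid model solutions). -/
def Kfun {I : ℕ} (α : ℝ) (κ ν μ : Fin I → ℝ)
    (Λ : (Fin I → ℝ) → Fin I → ℝ) (n : Fin I → ℝ) : ℝ :=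
  ∑ i, if 0 < n i then κ i * (μ i * n i / ν i) ^ α * (ν i / μ i - Λ n i) else 0

/-!
Sufficiency is concavity. Condition (iii) says that `q = pᵀA` is the gradient of `G` at `L` on
`I₊(n)`, and the α-fair utility lies below its tangent lines, so every feasible `L'` has
`G(L') ≤ G(L) + q ⬝ (L' - L) = G(L) + p ⬝ (A L' - A L) ≤ G(L)` by complementary slackness.

Necessity is the Karush–Kuhn–Tucker theorem for this problem. An optimum is positive on `I₊(n)`:
moving towards a strictly feasible point, the marginal utility `Λ ^ (-α)` of a vanishing
coordinate blows up while those of the other coordinates stay bounded. At a positive optimum no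
direction respecting the tight constraints increases `G` to first order, so by Farkas' lemma the
gradient of `G` is a nonnegative combination of the tight rows of `A`, restricted to `I₊(n)`;
these multipliers, extended by zero, are the prices `p`.
-/

open Matrix

lemma isClosed_of_isClosed_inter_preimage_Iic {X : Type*} [TopologicalSpace X] {S : Set X}
    {φ : X → ℝ} (hφ : Continuous φ) (hS : ∀ B, IsClosed (S ∩ φ ⁻¹' Iic B)) : IsClosed S := by
  refine closure_subset_iff_isClosed.mp fun x hx => ?_
  have hx' : x ∈ closure (S ∩ φ ⁻¹' Iic (φ x + 1)) := by
    refine closure_mono (inter_subset_inter_right _ (preimage_mono Iio_subset_Iic_self)) ?_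
    rw [inter_comm]
    exact (isOpen_Iio.preimage hφ).inter_closure ⟨by simp, hx⟩
  exact ((hS _).closure_eq ▸ hx').1

/-- The slices `{φ ≤ B}` of the cone are images of compact boxes of coefficients. -/
lemma isClosed_image_nonneg_of_pos {E ι : Type*} [AddCommGroup E] [Module ℝ E]
    [TopologicalSpace E] [IsTopologicalAddGroup E] [ContinuousSMul ℝ E] [T2Space E] [Fintype ι]
    (v : ι → E) (φ : E →L[ℝ] ℝ) (hφ : ∀ k, 0 < φ (v k)) :
    IsClosed (Fintype.linearCombination ℝ v '' {y | 0 ≤ y}) := by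
  set f := Fintype.linearCombination ℝ v
  have hφf : ∀ y, φ (f y) = ∑ k, y k * φ (v k) := fun y => by
    simp [f, Fintype.linearCombination_apply, map_sum, map_smul]
  refine isClosed_of_isClosed_inter_preimage_Iic φ.continuous fun B => ?_
  rw [← image_inter_preimage]
  refine (IsCompact.image ?_ (LinearMap.continuous_on_pi f)).isClosed
  refine (isCompact_Icc (a := 0) (b := fun k => B / φ (v k))).of_isClosed_subset ?_ ?_
  · exact (isClosed_le continuous_const continuous_id).inter
      (isClosed_Iic.preimage (φ.continuous.comp (LinearMap.continuous_on_pi f)))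
  · rintro y ⟨hy, hyB⟩
    refine ⟨hy, fun k => (le_div_iff₀ (hφ k)).2 ?_⟩
    calc y k * φ (v k) ≤ ∑ k, y k * φ (v k) :=
          Finset.single_le_sum (fun k _ => mul_nonneg (hy k) (hφ k).le) (Finset.mem_univ k)
      _ ≤ B := (hφf y).symm ▸ hyB

theorem exists_nonneg_sum_smul_eq_of_dotProduct_nonpos {ι κ : Type*} [Fintype ι] [Fintype κ]
    (v : κ → ι → ℝ) (w : ι → ℝ) (hw : ∀ k, 0 < v k ⬝ᵥ w) (g : ι → ℝ)
    (h : ∀ d, (∀ k, v k ⬝ᵥ d ≤ 0) → g ⬝ᵥ d ≤ 0) :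
    ∃ y : κ → ℝ, 0 ≤ y ∧ ∑ k, y k • v k = g := by
  classical
  let K : ProperCone ℝ (ι → ℝ) :=
    ⟨(PointedCone.positive ℝ (κ → ℝ)).map (Fintype.linearCombination ℝ v),
      isClosed_image_nonneg_of_pos v
        (LinearMap.toContinuousLinearMap ((dotProductBilin ℝ ℝ).flip w)) hw⟩
  have hmem : ∀ x, x ∈ K ↔ ∃ y : κ → ℝ, 0 ≤ y ∧ ∑ k, y k • v k = x := fun x => by
    change x ∈ PointedCone.map _ _ ↔ _
    simp [PointedCone.mem_map, Fintype.linearCombination_apply]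
  by_contra hg
  obtain ⟨f, hfK, hfg⟩ := K.hyperplane_separation_point (x₀ := g) ((hmem g).not.2 hg)
  set d : ι → ℝ := fun i => -f (Pi.single i 1)
  have hf : ∀ x, f x = -(x ⬝ᵥ d) := fun x => by
    conv_lhs => rw [← Finset.univ_sum_single x]
    simp only [map_sum, d, dotProduct, mul_neg, Finset.sum_neg_distrib, neg_neg]
    exact Finset.sum_congr rfl fun i _ => by
      rw [← smul_eq_mul, ← map_smul, ← Pi.single_smul, smul_eq_mul, mul_one]
  refine (h d fun k => ?_).not_gt ?_
  · have := hfK (v k) ((hmem _).2 ⟨Pi.single k 1, Pi.single_nonneg.2 zero_le_one, by simp⟩)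
    rw [hf] at this
    linarith
  · rw [hf] at hfg
    linarith

def fairUtility (α u : ℝ) : ℝ := if α = 1 then log u else u ^ (1 - α) / (1 - α)

lemma rpow_div_le_one_div_add_sub {β t : ℝ} (hβ0 : β ≠ 0) (hβ1 : β ≤ 1) (ht : 0 ≤ t)
    (ht' : β < 0 → 0 < t) : t ^ β / β ≤ 1 / β + (t - 1) := by
  rcases hβ0.lt_or_gt with hβ | hβ
  · have ht := ht' hβ
    have hexp : 1 + β * log t ≤ t ^ β := by
      rw [rpow_def_of_pos ht, add_comm, mul_comm]
      exact add_one_le_exp _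
    have hlog : β * (t - 1) ≤ β * log t :=
      mul_le_mul_of_nonpos_left (log_le_sub_one_of_pos ht) hβ.le
    rw [div_le_iff_of_neg hβ, add_mul, one_div_mul_cancel hβ0]
    linarith
  · have h := rpow_one_add_le_one_add_mul_self (s := t - 1) (by linarith) hβ.le hβ1
    rw [add_sub_cancel] at h
    rw [div_le_iff₀ hβ, add_mul, one_div_mul_cancel hβ0]
    linarith

lemma fairUtility_le_add_mul_sub {α x y : ℝ} (hα : 0 < α) (hx : 0 < x) (hy : 0 ≤ y)
    (hy' : 1 ≤ α → 0 < y) : fairUtility α y ≤ fairUtility α x + x ^ (-α) * (y - x) := by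
  unfold fairUtility
  split_ifs with h1
  · subst h1
    have hy := hy' le_rfl
    have := log_le_sub_one_of_pos (div_pos hy hx)
    rw [log_div hy.ne' hx.ne', div_sub_one hx.ne'] at this
    rw [rpow_neg_one, ← div_eq_inv_mul]
    linarith
  · have hyx : y = x * (y / x) := by field_simp
    have hslope : x ^ (-α) * (y - x) = x ^ (1 - α) * (y / x - 1) := by
      rw [sub_eq_add_neg 1 α, rpow_add hx, rpow_one]
      field_simp
    have key := rpow_div_le_one_div_add_sub (t := y / x) (sub_ne_zero.2 (Ne.symm h1))
      (by linarith) (div_nonneg hy hx.le) fun h => div_pos (hy' (by linarith)) hx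
    have hxβ : 0 < x ^ (1 - α) := rpow_pos_of_pos hx _
    rw [hslope]
    conv_lhs => rw [hyx, mul_rpow hx.le (div_nonneg hy hx.le)]
    calc x ^ (1 - α) * (y / x) ^ (1 - α) / (1 - α)
        = x ^ (1 - α) * ((y / x) ^ (1 - α) / (1 - α)) := by ring
      _ ≤ x ^ (1 - α) * (1 / (1 - α) + (y / x - 1)) := by gcongr
      _ = _ := by ring

lemma eq_mul_div_rpow_iff {α a k q l : ℝ} (hα : α ≠ 0) (ha : 0 < a) (hk : 0 < k) (hq : 0 < q)
    (hl : 0 < l) : l = a * (k / q) ^ (1 / α) ↔ k * a ^ α * l ^ (-α) = q := by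
  rw [mul_comm a, ← div_eq_iff ha.ne', eq_comm, one_div,
    rpow_inv_eq (div_pos hk hq).le (div_pos hl ha).le hα, div_rpow hl.le ha.le,
    div_eq_div_iff hq.ne' (rpow_pos_of_pos ha α).ne', rpow_neg hl.le, ← div_eq_mul_inv,
    div_eq_iff (rpow_pos_of_pos hl α).ne']
  constructor <;> intro h <;> linarith

lemma rpow_neg_mul_min_sub_le {α ε l s : ℝ} (hα : 0 ≤ α) (hε : 0 < ε) (hl : 0 ≤ l)
    (hs : s ∈ Icc (0 : ℝ) 1) :
    ε ^ (-α) * min (ε - l) 0 ≤ (l + s * (ε - l)) ^ (-α) * (ε - l) := by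
  rcases le_total l ε with hlε | hεl
  · rw [min_eq_right (by linarith), mul_zero]
    exact mul_nonneg (rpow_nonneg (by nlinarith [hs.1]) _) (by linarith)
  · rw [min_eq_left (by linarith)]
    refine mul_le_mul_of_nonpos_right (rpow_le_rpow_of_nonpos hε ?_ (by linarith)) (by linarith)
    nlinarith [hs.2]

section Objective

variable {I : ℕ}

def utilitySum (α : ℝ) (κ n L : Fin I → ℝ) : ℝ :=
  ∑ i, if 0 < n i then κ i * n i ^ α * fairUtility α (L i) else 0

def utilityGrad (α : ℝ) (κ n L : Fin I → ℝ) : Fin I → ℝ :=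
  fun i => if 0 < n i then κ i * n i ^ α * L i ^ (-α) else 0

lemma Gfun_eq_utilitySum {α : ℝ} {κ n L : Fin I → ℝ}
    (h : ¬(1 ≤ α ∧ ∃ i, 0 < n i ∧ L i = 0)) : Gfun α κ n L = utilitySum α κ n L := by
  rw [Gfun, if_neg h, utilitySum]
  split_ifs with h1
  · subst h1
    simp [fairUtility, rpow_one]
  · congr 1
    refine Finset.sum_congr rfl fun i _ => ?_
    split_ifs <;> simp [fairUtility, h1, mul_div_assoc]

lemma Gfun_of_pos {α : ℝ} {κ n L : Fin I → ℝ} (hL : ∀ i, 0 < n i → 0 < L i) :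
    Gfun α κ n L = utilitySum α κ n L :=
  Gfun_eq_utilitySum fun ⟨_, i, hi, h0⟩ => (hL i hi).ne' h0

lemma Gfun_le_utilitySum_add {α : ℝ} (hα : 0 < α) {κ n L L' : Fin I → ℝ}
    (hκ : ∀ i, 0 ≤ κ i) (hL : ∀ i, 0 ≤ L i) (hL' : ∀ i, 0 < n i → 0 < L' i) :
    Gfun α κ n L ≤ (utilitySum α κ n L' + utilityGrad α κ n L' ⬝ᵥ (L - L') : ℝ) := by
  by_cases h : 1 ≤ α ∧ ∃ i, 0 < n i ∧ L i = 0
  · simp [Gfun, h]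
  rw [Gfun_eq_utilitySum h, EReal.coe_le_coe_iff, utilitySum, utilitySum, dotProduct,
    ← Finset.sum_add_distrib]
  refine Finset.sum_le_sum fun i _ => ?_
  simp only [utilityGrad, Pi.sub_apply]
  split_ifs with hi
  · have hy : 1 ≤ α → 0 < L i := fun h1 => (hL i).lt_of_ne' fun h0 => h ⟨h1, i, hi, h0⟩
    have := mul_le_mul_of_nonneg_left (fairUtility_le_add_mul_sub hα (hL' i hi) (hL i) hy)
      (mul_nonneg (hκ i) (rpow_nonneg hi.le α))
    linarith
  · simp

end Objective

section Optimality

open Filter Topology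

variable {I J : ℕ} {A : Matrix (Fin J) (Fin I) ℝ} {C : Fin J → ℝ} {α : ℝ} {κ n L : Fin I → ℝ}

lemma convex_feasible : Convex ℝ (Feasible A C n) := by
  intro x hx y hy a b ha hb hab
  refine ⟨fun i => ?_, fun i hi => ?_, fun j => ?_⟩
  · simp only [Pi.add_apply, Pi.smul_apply, smul_eq_mul]
    exact add_nonneg (mul_nonneg ha (hx.1 i)) (mul_nonneg hb (hy.1 i))
  · simp [hx.2.1 i hi, hy.2.1 i hi]
  · change (A *ᵥ (a • x + b • y)) j ≤ C j
    have hxj : (A *ᵥ x) j ≤ C j := hx.2.2 j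
    have hyj : (A *ᵥ y) j ≤ C j := hy.2.2 j
    simp only [mulVec_add, mulVec_smul, Pi.add_apply, Pi.smul_apply, smul_eq_mul]
    calc a * (A *ᵥ x) j + b * (A *ᵥ y) j ≤ a * C j + b * C j := by gcongr
      _ = C j := by rw [← add_mul, hab, one_mul]

lemma exists_pos_mem_feasible (hA : ∀ j i, 0 ≤ A j i) (hC : ∀ j, 0 < C j) (n : Fin I → ℝ) :
    ∃ ε > 0, (fun i => if 0 < n i then ε else 0) ∈ Feasible A C n := by
  have hsmall : ∀ᶠ ε in 𝓝[>] (0 : ℝ), ∀ j, ε * ∑ i, A j i < C j :=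
    eventually_all.2 fun j => nhdsWithin_le_nhds <|
      ContinuousAt.eventually_lt (by fun_prop) continuousAt_const (by simpa using hC j)
  obtain ⟨ε, hεC, hε⟩ := (hsmall.and self_mem_nhdsWithin).exists
  refine ⟨ε, hε, fun i => ?_, fun i hi => by simp [hi], fun j => (hεC j).le.trans' ?_⟩
  · dsimp only
    split_ifs <;> simp [hε.le]
  · rw [Finset.mul_sum]
    refine Finset.sum_le_sum fun i _ => ?_
    rw [mul_comm ε]
    dsimp only
    split_ifs <;> simp [mul_nonneg (hA j i) hε.le]

theorem isAlloc_of_kkt (hα : 0 < α) (hκ : ∀ i, 0 < κ i) (hn : ∀ i, 0 ≤ n i)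
    (hL0 : ∀ i, n i = 0 → L i = 0) {p : Fin J → ℝ} (hp : ∀ j, 0 ≤ p j)
    (hslack : ∀ j, p j * (C j - (A *ᵥ L) j) = 0) (hq : ∀ i, 0 < n i → 0 < (p ᵥ* A) i)
    (hL : ∀ i, 0 < n i → L i = n i * (κ i / (p ᵥ* A) i) ^ (1 / α))
    (hfeas : ∀ j, (A *ᵥ L) j ≤ C j) :
    IsAlloc A C α κ n L := by
  have hpos : ∀ i, 0 < n i → 0 < L i := fun i hi => by
    rw [hL i hi]
    exact mul_pos hi (rpow_pos_of_pos (div_pos (hκ i) (hq i hi)) _)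
  have hgrad : ∀ i, 0 < n i → κ i * n i ^ α * L i ^ (-α) = (p ᵥ* A) i := fun i hi =>
    (eq_mul_div_rpow_iff hα.ne' hi (hκ i) (hq i hi) (hpos i hi)).1 (hL i hi)
  have hnonneg : ∀ i, 0 ≤ L i := fun i =>
    (hn i).lt_or_eq.elim (fun hi => (hpos i hi).le) fun hi => (hL0 i hi.symm).ge
  refine ⟨⟨hnonneg, hL0, hfeas⟩, fun L' hL' => ?_⟩
  have hdir : utilityGrad α κ n L ⬝ᵥ (L' - L) = p ⬝ᵥ (A *ᵥ L' - A *ᵥ L) := by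
    rw [← mulVec_sub, dotProduct_mulVec]
    refine Finset.sum_congr rfl fun i _ => ?_
    by_cases hi : 0 < n i
    · simp only [utilityGrad, if_pos hi, hgrad i hi]
    · have hni : n i = 0 := le_antisymm (not_lt.1 hi) (hn i)
      simp [hL0 i hni, hL'.2.1 i hni]
  have hslack' : p ⬝ᵥ (A *ᵥ L' - A *ᵥ L) ≤ 0 := Finset.sum_nonpos fun j _ => by
    have hj : (A *ᵥ L') j ≤ C j := hL'.2.2 j
    have := mul_le_mul_of_nonneg_left hj (hp j)
    simp only [Pi.sub_apply]
    linarith [hslack j]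
  calc Gfun α κ n L' ≤ (utilitySum α κ n L + utilityGrad α κ n L ⬝ᵥ (L' - L) : ℝ) :=
        Gfun_le_utilitySum_add hα (fun i => (hκ i).le) hL'.1 hpos
    _ ≤ (utilitySum α κ n L : ℝ) := EReal.coe_le_coe_iff.2 (by linarith)
    _ = Gfun α κ n L := (Gfun_of_pos hpos).symm

lemma utilityGrad_dotProduct_nonpos_of_mem_feasible (hα : 0 < α) (hκ : ∀ i, 0 ≤ κ i)
    (hopt : IsAlloc A C α κ n L) {d : Fin I → ℝ} {s : ℝ} (hs : 0 < s)
    (hfeas : L + s • d ∈ Feasible A C n) (hpos : ∀ i, 0 < n i → 0 < (L + s • d) i) :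
    utilityGrad α κ n (L + s • d) ⬝ᵥ d ≤ 0 := by
  have h := ((Gfun_of_pos hpos).symm.trans_le (hopt.2 _ hfeas)).trans
    (Gfun_le_utilitySum_add hα hκ hopt.1.1 hpos)
  rw [EReal.coe_le_coe_iff, show L - (L + s • d) = -(s • d) by abel, dotProduct_neg,
    dotProduct_smul, smul_eq_mul] at h
  exact nonpos_of_mul_nonpos_left (by linarith) hs

lemma add_sum_le_utilityGrad_dotProduct (hα : 0 ≤ α) (hκ : ∀ i, 0 ≤ κ i) (hL : ∀ i, 0 ≤ L i)
    {ε : ℝ} (hε : 0 < ε) {L' : Fin I → ℝ} (hL' : ∀ i, 0 < n i → L' i = ε) {i₀ : Fin I}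
    (hi₀ : 0 < n i₀) (hLi₀ : L i₀ = 0) {s : ℝ} (hs : s ∈ Icc (0 : ℝ) 1) :
    κ i₀ * n i₀ ^ α * (s * ε) ^ (-α) * ε + ∑ i, utilityGrad α κ n (fun _ => ε) i * min (ε - L i) 0
      ≤ utilityGrad α κ n (L + s • (L' - L)) ⬝ᵥ (L' - L) := by
  have hle : ∀ i, utilityGrad α κ n (fun _ => ε) i * min (ε - L i) 0 ≤
      utilityGrad α κ n (L + s • (L' - L)) i * (L' - L) i := fun i => by
    simp only [utilityGrad]
    split_ifs with hi
    · simp only [Pi.add_apply, Pi.smul_apply, Pi.sub_apply, smul_eq_mul, hL' i hi]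
      simpa only [mul_assoc] using mul_le_mul_of_nonneg_left
        (rpow_neg_mul_min_sub_le hα hε (hL i) hs) (mul_nonneg (hκ i) (rpow_nonneg hi.le α))
    · simp
  have h₀ := Finset.single_le_sum (fun i _ => sub_nonneg.2 (hle i)) (Finset.mem_univ i₀)
  have hb₀ : utilityGrad α κ n (fun _ => ε) i₀ * min (ε - L i₀) 0 = 0 := by simp [hLi₀, hε.le]
  have hg₀ : utilityGrad α κ n (L + s • (L' - L)) i₀ * (L' - L) i₀ =
      κ i₀ * n i₀ ^ α * (s * ε) ^ (-α) * ε := by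
    simp [utilityGrad, hi₀, hL' i₀ hi₀, hLi₀]
  rw [hb₀, hg₀, Finset.sum_sub_distrib, sub_zero] at h₀
  rw [dotProduct]
  linarith

theorem pos_of_isAlloc (hα : 0 < α) (hκ : ∀ i, 0 < κ i) (hopt : IsAlloc A C α κ n L) {ε : ℝ}
    (hε : 0 < ε) (hεfeas : (fun i => if 0 < n i then ε else 0) ∈ Feasible A C n) :
    ∀ i, 0 < n i → 0 < L i := by
  by_contra! h
  obtain ⟨i₀, hi₀, hLi₀⟩ := h
  have hLi₀' : L i₀ = 0 := le_antisymm hLi₀ (hopt.1.1 i₀)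
  set d : Fin I → ℝ := (fun i => if 0 < n i then ε else 0) - L
  have hfirst : ∀ s ∈ Ioc (0 : ℝ) 1, utilityGrad α κ n (L + s • d) ⬝ᵥ d ≤ 0 := fun s hs =>
    utilityGrad_dotProduct_nonpos_of_mem_feasible hα (fun i => (hκ i).le) hopt hs.1
      (convex_feasible.add_smul_sub_mem hopt.1 hεfeas (Ioc_subset_Icc_self hs)) fun i hi => by
        simp only [d, Pi.add_apply, Pi.smul_apply, Pi.sub_apply, if_pos hi, smul_eq_mul]
        nlinarith [mul_nonneg (sub_nonneg.2 hs.2) (hopt.1.1 i), mul_pos hs.1 hε]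
  have hlim : Tendsto (fun s => κ i₀ * n i₀ ^ α * (s * ε) ^ (-α) * ε) (𝓝[>] 0) atTop := by
    have hc : 0 < κ i₀ * n i₀ ^ α * ε ^ (-α) * ε :=
      mul_pos (mul_pos (mul_pos (hκ i₀) (rpow_pos_of_pos hi₀ α)) (rpow_pos_of_pos hε _)) hε
    refine ((tendsto_rpow_neg_nhdsGT_zero (neg_lt_zero.2 hα)).const_mul_atTop hc).congr'
      (eventually_mem_nhdsWithin.mono fun s (hs : 0 < s) => ?_)
    dsimp only
    rw [mul_rpow hs.le hε.le]
    ring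
  have hsmall : ∀ᶠ s in 𝓝[>] (0 : ℝ), s ∈ Ioc 0 1 := Ioc_mem_nhdsGT one_pos
  obtain ⟨s, hs, hsbig⟩ := (hsmall.and (hlim.eventually_gt_atTop
    (-∑ i, utilityGrad α κ n (fun _ => ε) i * min (ε - L i) 0))).exists
  have := add_sum_le_utilityGrad_dotProduct hα.le (fun i => (hκ i).le) hopt.1.1 hε
    (L' := fun i => if 0 < n i then ε else 0) (fun i hi => if_pos hi) hi₀ hLi₀'
    (Ioc_subset_Icc_self hs)
  linarith [hfirst s hs]

lemma eventually_mem_feasible_add_smul (hL : L ∈ Feasible A C n) (hpos : ∀ i, 0 < n i → 0 < L i)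
    {d : Fin I → ℝ} (hd : ∀ i, ¬0 < n i → d i = 0)
    (hdA : ∀ j, (A *ᵥ L) j = C j → (A *ᵥ d) j ≤ 0) :
    ∀ᶠ s in 𝓝[>] (0 : ℝ), L + s • d ∈ Feasible A C n ∧ ∀ i, 0 < n i → 0 < (L + s • d) i := by
  have hposd : ∀ᶠ s in 𝓝[>] (0 : ℝ), ∀ i, 0 < n i → 0 < (L + s • d) i :=
    nhdsWithin_le_nhds <| eventually_all.2 fun i => by
      by_cases hi : 0 < n i
      · refine (ContinuousAt.eventually_lt (f := fun _ => 0) (g := fun s : ℝ => L i + s * d i)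
          continuousAt_const (by fun_prop) (by simpa using hpos i hi)).mono fun s hs _ => ?_
        simpa using hs
      · exact Eventually.of_forall fun s hi' => absurd hi' hi
  have hcap : ∀ᶠ s in 𝓝[>] (0 : ℝ), ∀ j, (A *ᵥ (L + s • d)) j ≤ C j := by
    refine eventually_all.2 fun j => ?_
    simp only [mulVec_add, mulVec_smul, Pi.add_apply, Pi.smul_apply, smul_eq_mul]
    by_cases hj : (A *ᵥ L) j = C j
    · exact eventually_mem_nhdsWithin.mono fun s (hs : 0 < s) => by nlinarith [hdA j hj]
    · have hlt : (A *ᵥ L) j < C j := lt_of_le_of_ne (hL.2.2 j) hj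
      exact nhdsWithin_le_nhds <| (ContinuousAt.eventually_lt (by fun_prop) continuousAt_const
        (by simpa using hlt)).mono fun s hs => hs.le
  refine (hposd.and hcap).mono fun s ⟨hpos', hcap'⟩ => ⟨⟨fun i => ?_, fun i hi => ?_, hcap'⟩, hpos'⟩
  · by_cases hi : 0 < n i
    · exact (hpos' i hi).le
    · simpa [hd i hi] using hL.1 i
  · simp [hL.2.1 i hi, hd i (by simp [hi])]

theorem utilityGrad_dotProduct_nonpos (hα : 0 < α) (hκ : ∀ i, 0 ≤ κ i)
    (hopt : IsAlloc A C α κ n L) (hpos : ∀ i, 0 < n i → 0 < L i) {d : Fin I → ℝ}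
    (hd : ∀ i, ¬0 < n i → d i = 0) (hdA : ∀ j, (A *ᵥ L) j = C j → (A *ᵥ d) j ≤ 0) :
    utilityGrad α κ n L ⬝ᵥ d ≤ 0 := by
  have hlim : Tendsto (fun s : ℝ => utilityGrad α κ n (L + s • d) ⬝ᵥ d) (𝓝[>] 0)
      (𝓝 (utilityGrad α κ n L ⬝ᵥ d)) := by
    refine tendsto_nhdsWithin_of_tendsto_nhds (tendsto_finsetSum _ fun i _ => ?_)
    simp only [utilityGrad]
    split_ifs with hi
    · have hc : ContinuousAt (fun s : ℝ => (L + s • d) i ^ (-α)) 0 :=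
        ContinuousAt.rpow_const (by fun_prop) (Or.inl (by simpa using (hpos i hi).ne'))
      simpa using ((hc.const_mul (κ i * n i ^ α)).mul_const (d i)).tendsto
    · simp
  refine le_of_tendsto hlim (((eventually_mem_feasible_add_smul hopt.1 hpos hd hdA).and
    self_mem_nhdsWithin).mono fun s ⟨⟨hfeas, hpos'⟩, hs⟩ => ?_)
  exact utilityGrad_dotProduct_nonpos_of_mem_feasible hα hκ hopt hs hfeas hpos'

lemma exists_nonneg_tight_rows_eq (hα : 0 < α) (hκ : ∀ i, 0 ≤ κ i) (hn : ∀ i, 0 ≤ n i)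
    (hC : ∀ j, 0 < C j) (hopt : IsAlloc A C α κ n L) (hpos : ∀ i, 0 < n i → 0 < L i) :
    ∃ y : {j // (A *ᵥ L) j = C j} → ℝ, 0 ≤ y ∧
      ∀ i, 0 < n i → ∑ k, y k * A k i = κ i * n i ^ α * L i ^ (-α) := by
  classical
  have hL0 : ∀ i, ¬0 < n i → L i = 0 := fun i hi =>
    hopt.1.2.1 i (le_antisymm (not_lt.1 hi) (hn i))
  set restrict : (Fin I → ℝ) → Fin I → ℝ := fun x i => if 0 < n i then x i else 0
  let v : {j // (A *ᵥ L) j = C j} → Fin I → ℝ := fun k => restrict (A k)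
  have hAv : ∀ (k : {j // (A *ᵥ L) j = C j}) x, (A *ᵥ restrict x) k.1 = v k ⬝ᵥ x := fun k x => by
    simp only [mulVec, dotProduct]
    exact Finset.sum_congr rfl fun i _ => by by_cases hi : 0 < n i <;> simp [v, restrict, hi]
  have hvL : ∀ k, v k ⬝ᵥ L = C k := fun k => by
    rw [← hAv, ← k.2]
    congr 1
    ext i
    by_cases hi : 0 < n i <;> simp [restrict, hi, hL0]
  obtain ⟨y, hy, hyg⟩ := exists_nonneg_sum_smul_eq_of_dotProduct_nonpos v L
    (fun k => (hvL k).symm ▸ hC k) (utilityGrad α κ n L) fun d hd => by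
      have hgd : utilityGrad α κ n L ⬝ᵥ d = utilityGrad α κ n L ⬝ᵥ restrict d :=
        Finset.sum_congr rfl fun i _ => by
          by_cases hi : 0 < n i <;> simp [restrict, utilityGrad, hi]
      rw [hgd]
      exact utilityGrad_dotProduct_nonpos hα hκ hopt hpos (fun i hi => by simp [restrict, hi])
        fun j hj => (hAv ⟨j, hj⟩ d).trans_le (hd _)
  refine ⟨y, hy, fun i hi => ?_⟩
  have := congrFun hyg i
  simpa [v, restrict, utilityGrad, hi] using this

theorem exists_kkt_of_isAlloc (hα : 0 < α) (hκ : ∀ i, 0 ≤ κ i) (hn : ∀ i, 0 ≤ n i)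
    (hC : ∀ j, 0 < C j) (hopt : IsAlloc A C α κ n L) (hpos : ∀ i, 0 < n i → 0 < L i) :
    ∃ p : Fin J → ℝ, (∀ j, 0 ≤ p j) ∧ (∀ j, p j * (C j - (A *ᵥ L) j) = 0) ∧
      ∀ i, 0 < n i → (p ᵥ* A) i = κ i * n i ^ α * L i ^ (-α) := by
  classical
  obtain ⟨y, hy, hyA⟩ := exists_nonneg_tight_rows_eq hα hκ hn hC hopt hpos
  set p : Fin J → ℝ := fun j => if h : (A *ᵥ L) j = C j then y ⟨j, h⟩ else 0
  refine ⟨p, fun j => ?_, fun j => ?_, fun i hi => ?_⟩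
  · simp only [p]
    split_ifs
    exacts [hy _, le_rfl]
  · simp only [p]
    split_ifs with h <;> simp [h]
  · have htight : ∀ k : {j // (A *ᵥ L) j = C j}, p k * A k i = y k * A k i := fun k => by
      simp [p, k.2]
    have hslack : ∀ k : {j // ¬(A *ᵥ L) j = C j}, p k * A k i = 0 := fun k => by simp [p, k.2]
    rw [← hyA i hi, vecMul, dotProduct,
      ← Fintype.sum_subtype_add_sum_subtype (fun j => (A *ᵥ L) j = C j)]
    simp only [htight, hslack, Finset.sum_const_zero, add_zero]

end Optimality

theorem stmt3_general {I J : ℕ}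
    (A : Fin J → Fin I → ℝ) (hA01 : ∀ j i, A j i = 0 ∨ A j i = 1)
    (C : Fin J → ℝ) (hC : ∀ j, 0 < C j)
    (α : ℝ) (hα : 0 < α) (κ : Fin I → ℝ) (hκ : ∀ i, 0 < κ i)
    (n : Fin I → ℝ) (hn : ∀ i, 0 ≤ n i)
    (L : Fin I → ℝ) (hL0 : ∀ i, n i = 0 → L i = 0) :
    IsAlloc A C α κ n L ↔
      ∃ p : Fin J → ℝ, (∀ j, 0 ≤ p j) ∧
        (∀ j, p j * (C j - ∑ i, A j i * L i) = 0) ∧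
        (∀ i, 0 < n i → 0 < ∑ j, p j * A j i) ∧
        (∀ i, 0 < n i → L i = n i * (κ i / ∑ j, p j * A j i) ^ (1 / α)) ∧
        ∀ j, (∑ i, A j i * L i) ≤ C j := by
  constructor
  · intro hopt
    have hA : ∀ j i, 0 ≤ A j i := fun j i => (hA01 j i).elim (·.ge) fun h => h ▸ zero_le_one
    obtain ⟨ε, hε, hεfeas⟩ := exists_pos_mem_feasible hA hC n
    have hpos := pos_of_isAlloc hα hκ hopt hε hεfeas
    obtain ⟨p, hp, hslack, hgrad⟩ := exists_kkt_of_isAlloc hα (fun i => (hκ i).le) hn hC hopt hpos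
    have hq : ∀ i, 0 < n i → 0 < (p ᵥ* A) i := fun i hi => by
      rw [hgrad i hi]
      exact mul_pos (mul_pos (hκ i) (rpow_pos_of_pos hi α)) (rpow_pos_of_pos (hpos i hi) _)
    refine ⟨p, hp, hslack, hq, fun i hi => ?_, hopt.1.2.2⟩
    exact (eq_mul_div_rpow_iff hα.ne' hi (hκ i) (hq i hi) (hpos i hi)).2 (hgrad i hi).symm
  · rintro ⟨p, hp, hslack, hq, hL, hfeas⟩
    exact isAlloc_of_kkt hα hκ hn hL0 hp hslack hq hL hfeas

theorem stmt3 {I J : ℕ} (hI : 0 < I) (hJ : 0 < J)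
    (A : Fin J → Fin I → ℝ) (hA01 : ∀ j i, A j i = 0 ∨ A j i = 1)
    (hAcol : ∀ i, ∃ j, A j i = 1) (hArank : LinearIndependent ℝ A)
    (C : Fin J → ℝ) (hC : ∀ j, 0 < C j)
    (α : ℝ) (hα : 0 < α) (κ : Fin I → ℝ) (hκ : ∀ i, 0 < κ i)
    (n : Fin I → ℝ) (hn : ∀ i, 0 ≤ n i) (hne : n ≠ 0)
    (L : Fin I → ℝ) (hL0 : ∀ i, n i = 0 → L i = 0) :
    IsAlloc A C α κ n L ↔
      ∃ p : Fin J → ℝ, (∀ j, 0 ≤ p j) ∧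
        (∀ j, p j * (C j - ∑ i, A j i * L i) = 0) ∧
        (∀ i, 0 < n i → 0 < ∑ j, p j * A j i) ∧
        (∀ i, 0 < n i → L i = n i * (κ i / ∑ j, p j * A j i) ^ (1 / α)) ∧
        ∀ j, (∑ i, A j i * L i) ≤ C j :=
  stmt3_general A hA01 C hC α hα κ hκ n hn L hL0
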